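/- arXiv:1002.4202 — 2 statements merged into one kernel-verified Lean document; each statement's English description precedes it below -/
import Mathlib

section
/- Let a, b, A be positive real numbers with A ≥ 1, and let n, d ≥ 1 be positive integers such that n² ≤ a(log n + 1)^d + b. Then n ≤ max{ A(2d·log(2d) + 2·log A)^d, a/A + √b }. -/
/-!
If `n > A B^d` with `B = 2d log(2d) + 2 log A`, write `n = A y^d`, so `y > B`. From
`log y ≤ log(2d) + y/(2d) - 1` one gets `log n + 1 = log A + d log y + 1 ≤ B/2 + y/2 ≤ y`,
i.e. `A (log n + 1)^d ≤ n`. The hypothesis then gives `n² ≤ (a/A) n + b`, whence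
`n ≤ a/A + √b`.
-/

open Real

lemma log_mul_pow_add_one_le {A y : ℝ} {d : ℕ} (hA : 0 < A) (hd : 1 ≤ d) (hy : 0 < y)
    (hBy : 2 * d * log (2 * d) + 2 * log A ≤ y) :
    log (A * y ^ d) + 1 ≤ y := by
  have hd₁ : (1 : ℝ) ≤ d := by exact_mod_cast hd
  have h2d : (0 : ℝ) < 2 * d := by positivity
  have hlog_y : log y ≤ log (2 * d) + (y / (2 * d) - 1) := by
    have := log_le_sub_one_of_pos (div_pos hy h2d)
    rw [log_div hy.ne' h2d.ne'] at this
    linarith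
  have hd_log_y : d * log y ≤ d * log (2 * d) + y / 2 - d := by
    calc (d : ℝ) * log y ≤ d * (log (2 * d) + (y / (2 * d) - 1)) := by gcongr
      _ = d * log (2 * d) + y / 2 - d := by field_simp; ring
  rw [log_mul hA.ne' (by positivity), log_pow]
  linarith

lemma log_add_one_le_rpow_inv {A x : ℝ} {d : ℕ} (hA : 0 < A) (hd : 1 ≤ d) (hx : 0 < x)
    (hxB : A * (2 * d * log (2 * d) + 2 * log A) ^ d < x) :
    log x + 1 ≤ (x / A) ^ (d⁻¹ : ℝ) := by
  set y := (x / A) ^ (d⁻¹ : ℝ)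
  have hy : 0 < y := by positivity
  have hyd : y ^ d = x / A := by
    rw [← rpow_natCast, ← rpow_mul (by positivity), inv_mul_cancel₀ (by positivity), rpow_one]
  have hBy : 2 * d * log (2 * d) + 2 * log A ≤ y := by
    refine (lt_of_pow_lt_pow_left₀ d hy.le ?_).le
    rwa [hyd, lt_div_iff₀' hA]
  have hx_eq : A * y ^ d = x := by rw [hyd]; field_simp
  simpa only [hx_eq] using log_mul_pow_add_one_le hA hd hy hBy

lemma mul_log_add_one_pow_le {A x : ℝ} {d : ℕ} (hA : 0 < A) (hd : 1 ≤ d) (hx : 1 ≤ x)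
    (hxB : A * (2 * d * log (2 * d) + 2 * log A) ^ d < x) :
    A * (log x + 1) ^ d ≤ x := by
  have hlog : 0 ≤ log x + 1 := by linarith [log_nonneg hx]
  calc A * (log x + 1) ^ d ≤ A * ((x / A) ^ (d⁻¹ : ℝ)) ^ d := by
        gcongr; exact log_add_one_le_rpow_inv hA hd (by linarith) hxB
    _ = x := by
        rw [← rpow_natCast, ← rpow_mul (by positivity), inv_mul_cancel₀ (by positivity),
          rpow_one]
        field_simp

lemma le_add_sqrt_of_sq_le_mul_add {x c b : ℝ} (hc : 0 ≤ c) (hb : 0 ≤ b)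
    (h : x ^ 2 ≤ c * x + b) : x ≤ c + √b := by
  by_contra! hx
  have hsqrt : √b < x := by linarith
  have hx₀ : 0 < x := (sqrt_nonneg b).trans_lt hsqrt
  have : c * x + b < x ^ 2 :=
    calc c * x + b = c * x + √b * √b := by rw [mul_self_sqrt hb]
      _ ≤ (c + √b) * x := by rw [add_mul]; gcongr
      _ < x ^ 2 := by rw [sq]; exact mul_lt_mul_of_pos_right hx hx₀
  linarith

theorem stmt_0 (a b A : ℝ) (ha : 0 < a) (hb : 0 < b) (hA : 1 ≤ A)
    (n d : ℕ) (hn : 1 ≤ n) (hd : 1 ≤ d)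
    (h : (n : ℝ) ^ 2 ≤ a * (Real.log n + 1) ^ d + b) :
    (n : ℝ) ≤ max (A * (2 * d * Real.log (2 * d) + 2 * Real.log A) ^ d)
      (a / A + Real.sqrt b) := by
  rcases le_or_gt (n : ℝ) (A * (2 * d * log (2 * d) + 2 * log A) ^ d) with hsmall | hlarge
  · exact le_max_of_le_left hsmall
  refine le_max_of_le_right (le_add_sqrt_of_sq_le_mul_add (by positivity) hb.le ?_)
  have hA₀ : 0 < A := by linarith
  have hpow := mul_log_add_one_pow_le hA₀ hd (by exact_mod_cast hn) hlarge
  calc (n : ℝ) ^ 2 ≤ a / A * (A * (log n + 1) ^ d) + b := by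
        rwa [← mul_assoc, div_mul_cancel₀ a hA₀.ne']
    _ ≤ a / A * n + b := by gcongr
end

section
/- Let E_A : y² = x(x² − A) with A a positive integer (valuations ≤ 3), P ∈ E_A(ℚ) with x(kP) = A_k/B_k² in lowest terms and B_k > 0. Then x(2kP) = (A_k² + A·B_k⁴)² / (4·B_k²·A_k·(A_k² − A·B_k⁴)). Consequently, if B_k > 1 and |A_k| > A², then B_{2kP} is composite; similarly B_{2kP} is composite if B_k > 1 and A·B_k⁴ − A_k² > 4A², or if |A_k| > A³ and A_k² − A·B_k⁴ > 4A². -/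
noncomputable section

/-- A Weierstrass curve over `ℚ` has integer coefficients. -/
def WeierstrassCurve.IsIntegralModel (W : WeierstrassCurve ℚ) : Prop :=
  W.a₁.den = 1 ∧ W.a₂.den = 1 ∧ W.a₃.den = 1 ∧ W.a₄.den = 1 ∧ W.a₆.den = 1

/-- A minimal Weierstrass equation over `ℚ`: it has integer coefficients and its
discriminant has minimal `p`-adic valuation among all integral models. -/
def WeierstrassCurve.IsMinimalModel (W : WeierstrassCurve ℚ) : Prop :=
  W.IsIntegralModel ∧ ∀ C : WeierstrassCurve.VariableChange ℚ,
    (C • W).IsIntegralModel →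
    ∀ p : ℕ, p.Prime → padicValRat p W.Δ ≤ padicValRat p (C • W).Δ

/-- The `x`-coordinate of an affine point (junk value `0` at the point at infinity). -/
def WeierstrassCurve.Affine.Point.xcoord {W : WeierstrassCurve.Affine ℚ} :
    W.Point → ℚ
  | .zero => 0
  | @WeierstrassCurve.Affine.Point.some _ _ _ x _ _ => x

/-- The denominator `B_P` of a point: `x(P) = A_P / B_P ^ 2` in lowest terms. -/
def WeierstrassCurve.Affine.Point.Bden {W : WeierstrassCurve.Affine ℚ} :
    W.Point → ℕ
  | .zero => 0
  | @WeierstrassCurve.Affine.Point.some _ _ _ x _ _ => Nat.sqrt x.den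

/-- An isogeny `σ : E' → E` of elliptic curves over `ℚ`, of degree `deg`, recorded
together with the rational function `num / denom` (with `num = φ_σ` monic of degree
`deg` and `denom = ψ_σ ^ 2` of degree `deg - 1`) describing the induced map on
`x`-coordinates, and a dual isogeny `dual` with `dual ∘ σ = [deg]`. -/
structure WeierstrassCurve.Isogeny (E' E : WeierstrassCurve.Affine ℚ) where
  toFun : E'.Point → E.Point
  map_add : ∀ P Q : E'.Point, toFun (P + Q) = toFun P + toFun Q
  deg : ℕ
  deg_pos : 0 < deg
  num : Polynomial ℚ
  denom : Polynomial ℚ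
  num_monic : num.Monic
  num_natDegree : num.natDegree = deg
  denom_natDegree : denom.natDegree = deg - 1
  denom_ne_zero : denom ≠ 0
  x_spec : ∀ (x y : ℚ) (h : E'.Nonsingular x y), denom.eval x ≠ 0 →
      ∃ (x' y' : ℚ) (h' : E.Nonsingular x' y'),
        toFun (WeierstrassCurve.Affine.Point.some _ _ h) =
          WeierstrassCurve.Affine.Point.some _ _ h' ∧
        x' = num.eval x / denom.eval x
  ker_spec : ∀ (x y : ℚ) (h : E'.Nonsingular x y), denom.eval x = 0 →
      toFun (WeierstrassCurve.Affine.Point.some _ _ h) = 0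
  dual : E.Point → E'.Point
  dual_map_add : ∀ P Q : E.Point, dual (P + Q) = dual P + dual Q
  dual_comp : ∀ P : E'.Point, dual (toFun P) = deg • P

/-- The naive logarithmic height of a rational number. -/
def ratHeight (q : ℚ) : ℝ := Real.log (max (q.num.natAbs) q.den)

/-- The `j`-invariant of a Weierstrass curve. -/
def WeierstrassCurve.jInv (W : WeierstrassCurve ℚ) : ℚ := W.c₄ ^ 3 / W.Δ

/-- The height `h(E) = (1/12) * max (h (j E)) (h (Δ E))` of an elliptic curve. -/
def WeierstrassCurve.height (W : WeierstrassCurve ℚ) : ℝ :=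
  (1 / 12) * max (ratHeight W.jInv) (ratHeight W.Δ)

/-- Reduction of a rational number modulo `p` (junk if `p` divides the denominator). -/
def qred (p : ℕ) (q : ℚ) : ZMod p := (q.num : ZMod p) * (q.den : ZMod p)⁻¹

/-- The reduction modulo `p` of a Weierstrass curve over `ℚ`. -/
def WeierstrassCurve.red (W : WeierstrassCurve ℚ) (p : ℕ) : WeierstrassCurve (ZMod p) :=
  ⟨qred p W.a₁, qred p W.a₂, qred p W.a₃, qred p W.a₄, qred p W.a₆⟩

/-- A point `P` has good reduction at `p` if it reduces either to the point at infinity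
or to a nonsingular point of the reduced curve. -/
def WeierstrassCurve.Affine.Point.GoodRedAt {W : WeierstrassCurve.Affine ℚ}
    (P : W.Point) (p : ℕ) : Prop :=
  match P with
  | .zero => True
  | @WeierstrassCurve.Affine.Point.some _ _ _ x y _ =>
      p ∣ x.den ∨ (W.red p).toAffine.Nonsingular (qred p x) (qred p y)

end

/-!
On `y² = x³ - A x` the tangent construction gives `x(2Q) = (x² + A)² / (4 y²)` with
`y² = x (x² - A)`; substituting `x = a / b²` yields the stated formula, with numerator
`s² = (a² + A b⁴)²` and denominator `4 b² a (a² - A b⁴)`. As `a` and `b` are coprime, `s` is prime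
to `b`, the common factor of `s²` and `a` divides `A²`, and that of `s²` and `a² - A b⁴` divides
`4 A²`. So `B_{2kP}²` is divisible by `b² u w`, where `u ≥ |a| / A²`, `w ≥ |a² - A b⁴| / (4 A²)` and
`gcd(u, w) ∣ A`. In the first two cases `b` is then a proper divisor of `B_{2kP}`; in the third,
`B_{2kP} = p` prime would force `u = w = p`, so `p ∣ A`, while `u > A`.
-/

namespace WeierstrassCurve.Affine

variable {F : Type*} [Field F] {W : Affine F} {A x y x₂ y₂ : F}

lemma Y_ne_negY_of_add_self_eq_some [DecidableEq F] {h : W.Nonsingular x y}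
    {h₂ : W.Nonsingular x₂ y₂} (hadd : Point.some _ _ h + Point.some _ _ h = Point.some _ _ h₂) :
    y ≠ W.negY x y := fun hy =>
  Point.some_ne_zero h₂ (hadd ▸ Point.add_self_of_Y_eq hy)

lemma sq_eq_mul_sq_sub_of_nonsingular (hW : W = ⟨0, 0, 0, -A, 0⟩) (h : W.Nonsingular x y) :
    y ^ 2 = x * (x ^ 2 - A) := by
  subst hW
  linear_combination (equation_iff x y).1 h.1

lemma negY_eq_neg (hW : W = ⟨0, 0, 0, -A, 0⟩) : W.negY x y = -y := by
  subst hW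
  simp [negY]

variable [DecidableEq F] {h : W.Nonsingular x y} {h₂ : W.Nonsingular x₂ y₂}

lemma mul_sq_sub_ne_zero_of_add_self_eq_some (hW : W = ⟨0, 0, 0, -A, 0⟩)
    (hadd : Point.some _ _ h + Point.some _ _ h = Point.some _ _ h₂) : x * (x ^ 2 - A) ≠ 0 := by
  have hy := Y_ne_negY_of_add_self_eq_some hadd
  rw [negY_eq_neg hW] at hy
  rw [← sq_eq_mul_sq_sub_of_nonsingular hW h]
  exact pow_ne_zero 2 fun h0 => hy (by rw [h0, neg_zero])

lemma x_eq_of_add_self_eq_some (hW : W = ⟨0, 0, 0, -A, 0⟩)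
    (hadd : Point.some _ _ h + Point.some _ _ h = Point.some _ _ h₂) :
    x₂ = (x ^ 2 + A) ^ 2 / (4 * x * (x ^ 2 - A)) := by
  have hy := Y_ne_negY_of_add_self_eq_some hadd
  have hcurve := sq_eq_mul_sq_sub_of_nonsingular hW h
  rw [Point.add_self_of_Y_ne hy, Point.some.injEq] at hadd
  rw [← hadd.1, addX, slope_of_Y_ne rfl hy, negY_eq_neg hW]
  rw [negY_eq_neg hW] at hy
  have h2y : (y - -y) ^ 2 ≠ 0 := pow_ne_zero 2 (sub_ne_zero.2 hy)
  subst hW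
  rw [show 4 * x * (x ^ 2 - A) = (y - -y) ^ 2 by linear_combination (-4) * hcurve]
  simp only [zero_mul, mul_zero, add_zero, sub_zero]
  rw [eq_div_iff h2y, div_pow, sub_mul, sub_mul, div_mul_cancel₀ _ h2y]
  linear_combination (-8 * x) * hcurve

end WeierstrassCurve.Affine

lemma doubling_div_sq {F : Type*} [Field F] (A a b : F) (hb : b ≠ 0) :
    ((a / b ^ 2) ^ 2 + A) ^ 2 / (4 * (a / b ^ 2) * ((a / b ^ 2) ^ 2 - A)) =
      (a ^ 2 + A * b ^ 4) ^ 2 / (4 * b ^ 2 * a * (a ^ 2 - A * b ^ 4)) := by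
  rw [show ((a / b ^ 2) ^ 2 + A) ^ 2 = (a ^ 2 + A * b ^ 4) ^ 2 / b ^ 8 by field_simp,
    show 4 * (a / b ^ 2) * ((a / b ^ 2) ^ 2 - A) = 4 * b ^ 2 * a * (a ^ 2 - A * b ^ 4) / b ^ 8 by
      field_simp]
  exact div_div_div_cancel_right₀ (pow_ne_zero 8 hb) _ _

theorem Rat.isCoprime_num_of_den_eq_sq {q : ℚ} {b : ℕ} (h : q.den = b ^ 2) :
    IsCoprime q.num b := by
  rw [Int.isCoprime_iff_gcd_eq_one]
  exact Nat.Coprime.coprime_dvd_right (dvd_pow_self b two_ne_zero) (h ▸ q.reduced)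

theorem Nat.div_gcd_mul_div_gcd_dvd (a b n : ℕ) :
    a / a.gcd n * (b / b.gcd n) ∣ a * b / (a * b).gcd n := by
  rw [Nat.div_mul_div_comm (Nat.gcd_dvd_left a n) (Nat.gcd_dvd_left b n)]
  obtain ⟨c, hc⟩ : (a * b).gcd n ∣ a.gcd n * b.gcd n := by
    rw [Nat.gcd_comm, Nat.gcd_comm a, Nat.gcd_comm b]
    exact gcd_mul_dvd_mul_gcd n a b
  rw [hc, ← Nat.div_div_eq_div_mul]
  apply Nat.div_dvd_of_dvd
  rw [Nat.dvd_div_iff_mul_dvd (Nat.gcd_dvd_left _ _), ← hc]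
  exact Nat.mul_dvd_mul (Nat.gcd_dvd_left a n) (Nat.gcd_dvd_left b n)

theorem Int.abs_le_mul_natAbs_div_gcd {m n c : ℤ} (hc : c ≠ 0) (h : (m.gcd n : ℤ) ∣ c) :
    |m| ≤ |c| * (m.natAbs / m.gcd n : ℕ) := by
  have hle : m.gcd n ≤ c.natAbs := Nat.le_of_dvd (Int.natAbs_pos.2 hc) (Int.natCast_dvd.1 h)
  rw [← Int.natCast_natAbs, ← Int.natCast_natAbs, ← Nat.cast_mul, Nat.cast_le]
  calc m.natAbs = m.gcd n * (m.natAbs / m.gcd n) :=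
        (Nat.mul_div_cancel' (Int.natCast_dvd.1 (Int.gcd_dvd_left _ _))).symm
    _ ≤ c.natAbs * (m.natAbs / m.gcd n) := Nat.mul_le_mul_right _ hle

theorem Nat.one_lt_and_not_prime_of_sq_mul_dvd_sq {b t n : ℕ} (hb : 1 < b) (ht : 1 < t)
    (hn : n ≠ 0) (h : b ^ 2 * t ∣ n ^ 2) : 1 < n ∧ ¬ n.Prime := by
  have hbn : b ∣ n := (Nat.pow_dvd_pow_iff two_ne_zero).1 ((dvd_mul_right _ _).trans h)
  have hbn' : b < n := by
    refine (Nat.pow_lt_pow_iff_left two_ne_zero).1 ?_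
    calc b ^ 2 < b ^ 2 * t := lt_mul_of_one_lt_right (by positivity) ht
      _ ≤ n ^ 2 := Nat.le_of_dvd (by positivity) h
  exact ⟨hb.trans hbn', Nat.not_prime_of_dvd_of_lt hbn hb hbn'⟩

theorem Nat.one_lt_and_not_prime_of_mul_dvd_sq {u w n : ℕ} (hw : 1 < w) (huw : ¬ u ∣ w)
    (hn : n ≠ 0) (h : u * w ∣ n ^ 2) : 1 < n ∧ ¬ n.Prime := by
  refine ⟨?_, fun hp => ?_⟩
  · by_contra! hn1
    obtain rfl : n = 1 := by omega
    have : w ≤ 1 := Nat.le_of_dvd one_pos (by simpa using (dvd_mul_left w u).trans h)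
    omega
  · obtain ⟨i, -, rfl⟩ := (Nat.dvd_prime_pow hp).1 ((dvd_mul_right u w).trans h)
    obtain ⟨j, -, rfl⟩ := (Nat.dvd_prime_pow hp).1 ((dvd_mul_left _ _).trans h)
    rw [← pow_add, Nat.pow_dvd_pow_iff_le_right hp.one_lt] at h
    have hji : j < i := by
      by_contra! hij
      exact huw (pow_dvd_pow n hij)
    have hj : j ≠ 0 := by
      rintro rfl
      simp at hw
    omega

section Doubling

variable {A a b d : ℤ}

lemma dvd_of_dvd_of_dvd_sq_sub (hab : IsCoprime a b) (hda : d ∣ a)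
    (hdv : d ∣ a ^ 2 - A * b ^ 4) : d ∣ A := by
  have hAb : d ∣ A * b ^ 4 := by
    have := dvd_sub (hda.mul_left a) hdv
    rwa [show a * a - (a ^ 2 - A * b ^ 4) = A * b ^ 4 by ring] at this
  exact (hab.of_isCoprime_of_dvd_left hda).pow_right.dvd_of_dvd_mul_right hAb

lemma dvd_sq_of_dvd_of_dvd_sq_add (hab : IsCoprime a b) (hda : d ∣ a)
    (hds : d ∣ (a ^ 2 + A * b ^ 4) ^ 2) : d ∣ A ^ 2 := by
  have hAb : d ∣ A ^ 2 * b ^ 8 := by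
    have := dvd_sub hds (hda.mul_right (a ^ 3 + 2 * a * A * b ^ 4))
    rwa [show (a ^ 2 + A * b ^ 4) ^ 2 - a * (a ^ 3 + 2 * a * A * b ^ 4) = A ^ 2 * b ^ 8 by ring]
      at this
  exact (hab.of_isCoprime_of_dvd_left hda).pow_right.dvd_of_dvd_mul_right hAb

lemma dvd_four_mul_sq_of_dvd_sub_of_dvd_sq_add (hab : IsCoprime a b)
    (hdv : d ∣ a ^ 2 - A * b ^ 4) (hds : d ∣ (a ^ 2 + A * b ^ 4) ^ 2) : d ∣ 4 * A ^ 2 := by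
  have hAb : d ∣ 4 * A ^ 2 * b ^ 8 := by
    have := dvd_sub hds (hdv.mul_right (a ^ 2 + 3 * A * b ^ 4))
    rwa [show (a ^ 2 + A * b ^ 4) ^ 2 - (a ^ 2 - A * b ^ 4) * (a ^ 2 + 3 * A * b ^ 4) =
      4 * A ^ 2 * b ^ 8 by ring] at this
  have hvb : IsCoprime (a ^ 2 - A * b ^ 4) b := by
    have := (hab.pow_left (m := 2)).add_mul_left_left (-A * b ^ 3)
    rwa [show a ^ 2 + b * (-A * b ^ 3) = a ^ 2 - A * b ^ 4 by ring] at this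
  exact (hvb.of_isCoprime_of_dvd_left hdv).pow_right.dvd_of_dvd_mul_right hAb

theorem exists_dvd_den_doubling (hA : A ≠ 0) (hab : IsCoprime a b)
    (hD : 4 * b ^ 2 * a * (a ^ 2 - A * b ^ 4) ≠ 0) :
    ∃ u w : ℕ, b.natAbs ^ 2 * u * w ∣
        (((a ^ 2 + A * b ^ 4) ^ 2 : ℤ) / (4 * b ^ 2 * a * (a ^ 2 - A * b ^ 4) : ℤ) : ℚ).den ∧
      |a| ≤ A ^ 2 * u ∧ |a ^ 2 - A * b ^ 4| ≤ 4 * A ^ 2 * w ∧ (u.gcd w : ℤ) ∣ A := by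
  set s := a ^ 2 + A * b ^ 4
  set v := a ^ 2 - A * b ^ 4
  refine ⟨a.natAbs / a.gcd (s ^ 2), v.natAbs / v.gcd (s ^ 2), ?_, ?_, ?_, ?_⟩
  · have hsb : IsCoprime s b := by
      have := (hab.pow_left (m := 2)).add_mul_left_left (A * b ^ 3)
      rwa [show a ^ 2 + b * (A * b ^ 3) = s by ring] at this
    have hcop : Nat.Coprime (b ^ 2).natAbs (s ^ 2).natAbs :=
      Int.isCoprime_iff_gcd_eq_one.1 (hsb.symm.pow (m := 2) (n := 2))
    rw [← Rat.divInt_eq_div, Rat.den_divInt, if_neg hD]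
    calc b.natAbs ^ 2 * (a.natAbs / a.gcd (s ^ 2)) * (v.natAbs / v.gcd (s ^ 2))
        = (b ^ 2).natAbs / (b ^ 2).natAbs.gcd (s ^ 2).natAbs *
            (a.natAbs / a.gcd (s ^ 2) * (v.natAbs / v.gcd (s ^ 2))) := by
          rw [hcop, Nat.div_one, Int.natAbs_pow, mul_assoc]
      _ ∣ (b ^ 2).natAbs * (a.natAbs * v.natAbs) /
            ((b ^ 2).natAbs * (a.natAbs * v.natAbs)).gcd (s ^ 2).natAbs :=
          (mul_dvd_mul_left _ (Nat.div_gcd_mul_div_gcd_dvd _ _ _)).trans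
            (Nat.div_gcd_mul_div_gcd_dvd _ _ _)
      _ ∣ 4 * ((b ^ 2).natAbs * (a.natAbs * v.natAbs)) /
            (4 * ((b ^ 2).natAbs * (a.natAbs * v.natAbs))).gcd (s ^ 2).natAbs :=
          (dvd_mul_left _ _).trans (Nat.div_gcd_mul_div_gcd_dvd _ _ _)
      _ = _ := by simp only [Int.gcd_eq_natAbs, Int.natAbs_mul, mul_assoc]; rfl
  · rw [← abs_of_nonneg (sq_nonneg A)]
    exact Int.abs_le_mul_natAbs_div_gcd (pow_ne_zero 2 hA)
      (dvd_sq_of_dvd_of_dvd_sq_add hab (Int.gcd_dvd_left _ _) (Int.gcd_dvd_right _ _))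
  · rw [← abs_of_nonneg (by positivity : 0 ≤ 4 * A ^ 2)]
    exact Int.abs_le_mul_natAbs_div_gcd (by positivity)
      (dvd_four_mul_sq_of_dvd_sub_of_dvd_sq_add hab (Int.gcd_dvd_left _ _)
        (Int.gcd_dvd_right _ _))
  · refine dvd_of_dvd_of_dvd_sq_sub hab ?_ ?_ <;> rw [Int.natCast_dvd]
    · exact (Nat.gcd_dvd_left _ _).trans
        (Nat.div_dvd_of_dvd (Int.natCast_dvd.1 (Int.gcd_dvd_left _ _)))
    · exact (Nat.gcd_dvd_right _ _).trans
        (Nat.div_dvd_of_dvd (Int.natCast_dvd.1 (Int.gcd_dvd_left _ _)))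

theorem one_lt_and_not_prime_of_den_doubling {A : ℕ} (hA : 0 < A) {a : ℤ} {b B : ℕ}
    (hab : IsCoprime a b) (hD : 4 * (b : ℤ) ^ 2 * a * (a ^ 2 - A * b ^ 4) ≠ 0)
    (hB : (((a ^ 2 + A * b ^ 4) ^ 2 : ℤ) / (4 * b ^ 2 * a * (a ^ 2 - A * b ^ 4) : ℤ) : ℚ).den =
      B ^ 2) :
    (1 < b → (A : ℤ) ^ 2 < |a| → 1 < B ∧ ¬ B.Prime) ∧
    (1 < b → 4 * (A : ℤ) ^ 2 < A * b ^ 4 - a ^ 2 → 1 < B ∧ ¬ B.Prime) ∧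
    ((A : ℤ) ^ 3 < |a| → 4 * (A : ℤ) ^ 2 < a ^ 2 - A * b ^ 4 → 1 < B ∧ ¬ B.Prime) := by
  have hA0 : (0 : ℤ) < A := by exact_mod_cast hA
  obtain ⟨u, w, hdvd, hu, hw, huw⟩ := exists_dvd_den_doubling hA0.ne' hab hD
  rw [hB, Int.natAbs_natCast] at hdvd
  have hB0 : B ≠ 0 := by
    rintro rfl
    simp at hB
  have hw1 (hv : 4 * (A : ℤ) ^ 2 < |a ^ 2 - A * b ^ 4|) : 1 < w := by
    have : 4 * (A : ℤ) ^ 2 * 1 < 4 * A ^ 2 * w := by linarith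
    exact_mod_cast lt_of_mul_lt_mul_left this (by positivity)
  refine ⟨fun hb ha => ?_, fun hb hv => ?_, fun ha hv => ?_⟩
  · have hu1 : 1 < u := by
      have : (A : ℤ) ^ 2 * 1 < A ^ 2 * u := by linarith
      exact_mod_cast lt_of_mul_lt_mul_left this (sq_nonneg _)
    exact Nat.one_lt_and_not_prime_of_sq_mul_dvd_sq hb hu1 hB0 ((dvd_mul_right _ _).trans hdvd)
  · exact Nat.one_lt_and_not_prime_of_sq_mul_dvd_sq hb
      (hw1 (by linarith [neg_abs_le (a ^ 2 - A * b ^ 4)])) hB0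
      ((Dvd.intro_left u (by ring)).trans hdvd)
  · have hAu : (A : ℤ) < u := by
      have : (A : ℤ) ^ 2 * A < A ^ 2 * u := by linarith
      exact lt_of_mul_lt_mul_left this (sq_nonneg _)
    have hnuw : ¬ u ∣ w := fun h => by
      rw [Nat.gcd_eq_left h] at huw
      exact absurd (Int.le_of_dvd hA0 huw) (not_le.2 hAu)
    exact Nat.one_lt_and_not_prime_of_mul_dvd_sq (hw1 (hv.trans_le (le_abs_self _))) hnuw hB0
      ((Dvd.intro_left (b ^ 2) (by ring)).trans hdvd)

end Doubling

open WeierstrassCurve.Affine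

theorem stmt_18_general (A : ℕ) (hA : 0 < A)
    (W : WeierstrassCurve.Affine ℚ) (hW : W = ⟨0, 0, 0, -(A : ℚ), 0⟩)
    (P : W.Point) (k : ℕ)
    (x y : ℚ) (h : W.Nonsingular x y)
    (hkP : k • P = WeierstrassCurve.Affine.Point.some _ _ h)
    (Ak : ℤ) (Bk : ℕ) (hBk : 0 < Bk) (hnum : x.num = Ak) (hden : x.den = Bk ^ 2)
    (x2 y2 : ℚ) (h2 : W.Nonsingular x2 y2)
    (h2kP : (2 * k) • P = WeierstrassCurve.Affine.Point.some _ _ h2)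
    (B2 : ℕ) (hden2 : x2.den = B2 ^ 2) :
    x2 = ((Ak : ℚ) ^ 2 + (A : ℚ) * (Bk : ℚ) ^ 4) ^ 2 /
        (4 * (Bk : ℚ) ^ 2 * (Ak : ℚ) * ((Ak : ℚ) ^ 2 - (A : ℚ) * (Bk : ℚ) ^ 4)) ∧
    (1 < Bk → (A : ℤ) ^ 2 < |Ak| → 1 < B2 ∧ ¬ B2.Prime) ∧
    (1 < Bk → 4 * (A : ℤ) ^ 2 < (A : ℤ) * (Bk : ℤ) ^ 4 - Ak ^ 2 → 1 < B2 ∧ ¬ B2.Prime) ∧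
    ((A : ℤ) ^ 3 < |Ak| → 4 * (A : ℤ) ^ 2 < Ak ^ 2 - (A : ℤ) * (Bk : ℤ) ^ 4 →
      1 < B2 ∧ ¬ B2.Prime) := by
  have hadd : Point.some _ _ h + Point.some _ _ h = Point.some _ _ h2 := by
    rw [← hkP, ← h2kP, two_mul, add_nsmul]
  have hBk0 : (Bk : ℚ) ≠ 0 := by positivity
  have hx : x = Ak / Bk ^ 2 := by
    rw [← Rat.num_div_den x, hnum, hden]
    push_cast
    rfl
  have hformula : x2 = ((Ak : ℚ) ^ 2 + (A : ℚ) * (Bk : ℚ) ^ 4) ^ 2 /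
      (4 * (Bk : ℚ) ^ 2 * (Ak : ℚ) * ((Ak : ℚ) ^ 2 - (A : ℚ) * (Bk : ℚ) ^ 4)) := by
    rw [x_eq_of_add_self_eq_some hW hadd, hx, doubling_div_sq _ _ _ hBk0]
  have hD : 4 * (Bk : ℤ) ^ 2 * Ak * (Ak ^ 2 - A * Bk ^ 4) ≠ 0 := by
    have hDx : ((4 * (Bk : ℤ) ^ 2 * Ak * (Ak ^ 2 - A * Bk ^ 4) : ℤ) : ℚ) =
        4 * Bk ^ 8 * (x * (x ^ 2 - A)) := by
      rw [hx]
      push_cast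
      field_simp
    rw [← Int.cast_ne_zero (α := ℚ), hDx]
    exact mul_ne_zero (by positivity) (mul_sq_sub_ne_zero_of_add_self_eq_some hW hadd)
  have hcop : IsCoprime Ak (Bk : ℤ) := hnum ▸ Rat.isCoprime_num_of_den_eq_sq hden
  refine ⟨hformula, one_lt_and_not_prime_of_den_doubling hA hcop hD ?_⟩
  rw [← hden2, hformula]
  push_cast
  rfl

/-- Duplication on `E_A : y² = x (x² - A)`: if `x(kP) = A_k / B_k²` in lowest terms then
`x(2kP) = (A_k² + A B_k⁴)² / (4 B_k² A_k (A_k² - A B_k⁴))`, and `B_{2kP}` is composite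
in each of the three listed situations. -/
theorem stmt_18 (A : ℕ) (hA : 0 < A)
    (hval : ∀ p : ℕ, p.Prime → padicValNat p A ≤ 3)
    (W : WeierstrassCurve.Affine ℚ) (hW : W = ⟨0, 0, 0, -(A : ℚ), 0⟩)
    (P : W.Point) (k : ℕ) (hk : 0 < k)
    (x y : ℚ) (h : W.Nonsingular x y)
    (hkP : k • P = WeierstrassCurve.Affine.Point.some _ _ h)
    (Ak : ℤ) (Bk : ℕ) (hBk : 0 < Bk) (hnum : x.num = Ak) (hden : x.den = Bk ^ 2)
    (x2 y2 : ℚ) (h2 : W.Nonsingular x2 y2)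
    (h2kP : (2 * k) • P = WeierstrassCurve.Affine.Point.some _ _ h2)
    (A2 : ℤ) (B2 : ℕ) (hnum2 : x2.num = A2) (hden2 : x2.den = B2 ^ 2) :
    x2 = ((Ak : ℚ) ^ 2 + (A : ℚ) * (Bk : ℚ) ^ 4) ^ 2 /
        (4 * (Bk : ℚ) ^ 2 * (Ak : ℚ) * ((Ak : ℚ) ^ 2 - (A : ℚ) * (Bk : ℚ) ^ 4)) ∧
    (1 < Bk → (A : ℤ) ^ 2 < |Ak| → 1 < B2 ∧ ¬ B2.Prime) ∧
    (1 < Bk → 4 * (A : ℤ) ^ 2 < (A : ℤ) * (Bk : ℤ) ^ 4 - Ak ^ 2 → 1 < B2 ∧ ¬ B2.Prime) ∧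
    ((A : ℤ) ^ 3 < |Ak| → 4 * (A : ℤ) ^ 2 < Ak ^ 2 - (A : ℤ) * (Bk : ℤ) ^ 4 →
      1 < B2 ∧ ¬ B2.Prime) :=
  stmt_18_general A hA W hW P k x y h hkP Ak Bk hBk hnum hden x2 y2 h2 h2kP B2 hden2
end
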